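/- arXiv:1309.3720 — 2 statements merged into one kernel-verified Lean document; each statement's English description precedes it below -/
import Mathlib

section
/- Auto-correlation of chirps: for every a,b ∈ ℤ_N, the ambiguity function A(C_{L_{a,b}}, C_{L_{a,b}})[v] equals e(bτ) if v = (τ, aτ) lies on the line L_a, and equals 0 if v ∉ L_a. -/
open Finset

/-- `e(t) = exp(2πit/N)` on `ℤ/N`. -/
noncomputable def eN (N : ℕ) [NeZero N] (t : ZMod N) : ℂ :=
  Complex.exp (2 * Real.pi * Complex.I * (t.val : ℂ) / N)

/-- Heisenberg operator `π(τ,ω)`. -/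
noncomputable def heis (N : ℕ) [NeZero N] (τ ω : ZMod N) (f : ZMod N → ℂ) : ZMod N → ℂ :=
  fun n => eN N (-(2⁻¹ * τ * ω)) * eN N (ω * n) * f (n - τ)

/-- Standard inner product on sequences. -/
noncomputable def inn (N : ℕ) [NeZero N] (f g : ZMod N → ℂ) : ℂ :=
  ∑ n : ZMod N, f n * (starRingEnd ℂ) (g n)

/-- Ambiguity function `A(f,g)[v] = ⟨π(v)f, g⟩`. -/
noncomputable def amb (N : ℕ) [NeZero N] (f g : ZMod N → ℂ) (v : ZMod N × ZMod N) : ℂ :=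
  inn N (heis N v.1 v.2 f) g

/-- Chirp sequence `C_{L_{a,b}}[n] = e(2⁻¹ a n² − b n)/√N`. -/
noncomputable def chirp (N : ℕ) [NeZero N] (a b : ZMod N) : ZMod N → ℂ :=
  fun n => eN N (2⁻¹ * a * n ^ 2 - b * n) / (Real.sqrt N : ℂ)

/-- Dirac delta sequence supported at `b`. -/
def deltaSeq (N : ℕ) (b : ZMod N) : ZMod N → ℂ :=
  fun n => if n = b then 1 else 0

/-- Channel operator `H(S)[n] = Σ_k α_k e(ω_k n) S[n−τ_k]`. -/
noncomputable def chanOp (N : ℕ) [NeZero N] (r : ℕ) (α : Fin r → ℂ)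
    (tw : Fin r → ZMod N × ZMod N) (S : ZMod N → ℂ) : ZMod N → ℂ :=
  fun n => ∑ k : Fin r, α k * eN N ((tw k).2 * n) * S (n - (tw k).1)

/-! The chirp has quadratic phase, so in `π(τ,ω)C[n] · conj C[n]` the quadratic terms in `n`
cancel (this is where `2⁻¹ * 2 = 1`, i.e. `N` odd, enters) and what remains is the linear
character `e((ω - aτ) n)` times a constant of modulus `1/N`. Summing over `n`, orthogonality of
characters leaves `N · [ω = aτ]`, and on the line `ω = aτ` the constant is `e(bτ)/N`. -/

lemma eN_eq_stdAddChar (N : ℕ) [NeZero N] : eN N = ZMod.stdAddChar := by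
  ext t
  rw [ZMod.stdAddChar_apply, ZMod.toCircle_apply, eN]

lemma eN_add (N : ℕ) [NeZero N] (s t : ZMod N) : eN N (s + t) = eN N s * eN N t := by
  rw [eN_eq_stdAddChar, AddChar.map_add_eq_mul]

lemma conj_eN (N : ℕ) [NeZero N] (t : ZMod N) : starRingEnd ℂ (eN N t) = eN N (-t) := by
  rw [eN_eq_stdAddChar, AddChar.map_neg_eq_conj]

lemma sum_eN_mul (N : ℕ) [NeZero N] (c : ZMod N) :
    ∑ n : ZMod N, eN N (c * n) = if c = 0 then (N : ℂ) else 0 := by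
  simp_rw [eN_eq_stdAddChar, mul_comm c]
  rw [AddChar.sum_mulShift c (ZMod.isPrimitive_stdAddChar N), ZMod.card,
    Nat.cast_ite, Nat.cast_zero]

lemma ZMod.isUnit_two_of_odd {N : ℕ} (hodd : Odd N) : IsUnit (2 : ZMod N) := by
  exact_mod_cast (ZMod.isUnit_iff_coprime 2 N).2 (Nat.coprime_two_left.2 hodd)

lemma heis_chirp_mul_conj_chirp (N : ℕ) [NeZero N] (h2 : IsUnit (2 : ZMod N))
    (a b τ ω n : ZMod N) :
    heis N τ ω (chirp N a b) n * starRingEnd ℂ (chirp N a b n) =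
      eN N ((ω - a * τ) * n) * eN N (2⁻¹ * τ * (a * τ - ω) + b * τ) / N := by
  have hsqrt : (Real.sqrt N : ℂ) * Real.sqrt N = N := by
    rw [← Complex.ofReal_mul, Real.mul_self_sqrt (Nat.cast_nonneg N), Complex.ofReal_natCast]
  have hphase : -(2⁻¹ * τ * ω) + ω * n + (2⁻¹ * a * (n - τ) ^ 2 - b * (n - τ))
      + -(2⁻¹ * a * n ^ 2 - b * n) = (ω - a * τ) * n + (2⁻¹ * τ * (a * τ - ω) + b * τ) := by
    linear_combination (-(a * τ * n)) * ZMod.inv_mul_of_unit 2 h2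
  calc heis N τ ω (chirp N a b) n * starRingEnd ℂ (chirp N a b n)
      = eN N (-(2⁻¹ * τ * ω) + ω * n + (2⁻¹ * a * (n - τ) ^ 2 - b * (n - τ))
          + -(2⁻¹ * a * n ^ 2 - b * n)) / (Real.sqrt N * Real.sqrt N) := by
        simp only [heis, chirp, map_div₀, conj_eN, Complex.conj_ofReal, eN_add]
        ring
    _ = _ := by rw [hphase, eN_add, hsqrt]

lemma amb_chirp_self (N : ℕ) [NeZero N] (h2 : IsUnit (2 : ZMod N)) (a b τ ω : ZMod N) :
    amb N (chirp N a b) (chirp N a b) (τ, ω) = if ω = a * τ then eN N (b * τ) else 0 := by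
  have hN : (N : ℂ) ≠ 0 := NeZero.ne _
  simp only [amb, inn, heis_chirp_mul_conj_chirp N h2, ← Finset.sum_div, ← Finset.sum_mul,
    sum_eN_mul, sub_eq_zero]
  split_ifs with h
  · rw [h, sub_self, mul_zero, zero_add]
    field_simp
  · simp

theorem chirp_autocorrelation_general (N : ℕ) [NeZero N] (hodd : Odd N)
    (a b : ZMod N) :
    (∀ τ : ZMod N, amb N (chirp N a b) (chirp N a b) (τ, a * τ) = eN N (b * τ)) ∧
    (∀ v : ZMod N × ZMod N, v.2 ≠ a * v.1 → amb N (chirp N a b) (chirp N a b) v = 0) := by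
  have h2 := ZMod.isUnit_two_of_odd hodd
  exact ⟨fun τ => by rw [amb_chirp_self N h2, if_pos rfl],
    fun ⟨τ, ω⟩ hv => by rw [amb_chirp_self N h2, if_neg hv]⟩

theorem chirp_autocorrelation (N : ℕ) [NeZero N] (hN : N.Prime) (hodd : Odd N)
    (a b : ZMod N) :
    (∀ τ : ZMod N, amb N (chirp N a b) (chirp N a b) (τ, a * τ) = eN N (b * τ)) ∧
    (∀ v : ZMod N × ZMod N, v.2 ≠ a * v.1 → amb N (chirp N a b) (chirp N a b) v = 0) :=
  chirp_autocorrelation_general N hodd a b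
end

section
/- Perfectness probability: Let v_1,…,v_r be distinct points of V generic with respect to three distinct lines L, M, M°. The probability (over uniformly random choice of distinct lines L, M, M° among lines through the origin, conditioned on genericity) that {v_1,…,v_r} is perfect with respect to L, M, M° is at least 1 − r(r²−r)/N. -/
/-- The shifted line (coset) `K + u`. -/
def shiftedLine (N : ℕ) (K : Submodule (ZMod N) (ZMod N × ZMod N))
    (u : ZMod N × ZMod N) : Set (ZMod N × ZMod N) :=
  {x | x - u ∈ K}

/-- The family of shifted lines `{v_i + K : i, K ∈ Ls}`. -/
def lineFamily (N : ℕ) {r : ℕ} (v : Fin r → ZMod N × ZMod N)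
    (Ls : Set (Submodule (ZMod N) (ZMod N × ZMod N))) : Set (Set (ZMod N × ZMod N)) :=
  {C | ∃ i K, K ∈ Ls ∧ C = shiftedLine N K (v i)}

/-- Incidence number of `x`: the number of shifted lines of the family containing `x`. -/
noncomputable def incNum (N : ℕ) {r : ℕ} (v : Fin r → ZMod N × ZMod N)
    (Ls : Set (Submodule (ZMod N) (ZMod N × ZMod N))) (x : ZMod N × ZMod N) : ℕ :=
  Set.ncard {C ∈ lineFamily N v Ls | x ∈ C}

/-- Perfectness of `{v_1,…,v_r}` w.r.t. a collection of `d` lines. -/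
def Perfect' (N : ℕ) {r : ℕ} (v : Fin r → ZMod N × ZMod N)
    (Ls : Set (Submodule (ZMod N) (ZMod N × ZMod N))) (d : ℕ) : Prop :=
  ∀ x : ZMod N × ZMod N, incNum N v Ls x = d → ∃ i, x = v i

/-- Triples of pairwise distinct lines w.r.t. each of which `v` is generic. -/
def genericTriples (N : ℕ) {r : ℕ} (v : Fin r → ZMod N × ZMod N) :
    Set (Submodule (ZMod N) (ZMod N × ZMod N) × Submodule (ZMod N) (ZMod N × ZMod N)
          × Submodule (ZMod N) (ZMod N × ZMod N)) :=
  {t | (Module.finrank (ZMod N) t.1 = 1 ∧ Module.finrank (ZMod N) t.2.1 = 1 ∧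
          Module.finrank (ZMod N) t.2.2 = 1) ∧
       (t.1 ≠ t.2.1 ∧ t.1 ≠ t.2.2 ∧ t.2.1 ≠ t.2.2) ∧
       (∀ i j, i ≠ j → v i - v j ∉ t.1 ∧ v i - v j ∉ t.2.1 ∧ v i - v j ∉ t.2.2)}

/-! Fix the first two lines `L ≠ M`; the bound is proved for each such fibre and then summed.
A third line `M'` spoils perfectness only through a point `x ∉ {v_i}` on `v_i + L`, `v_j + M` and
`v_k + M'` with `i, j, k` distinct. Since `L ≠ M`, the pair `(i, j)` determines `x`, and then `k`
determines `M' = span (x - v_k)`, so at most `r (r - 1) (r - 2)` choices of `M'` are bad. At most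
`r² - r` of the `N + 1` lines contain a difference `v_i - v_j`, so at least `N - 1 - (r² - r)`
choices of `M'` are admissible, and `N (r - 2) ≤ r (N - 1 - (r² - r))` once `r (r² - r) < N`. -/

open Module Submodule

theorem Set.mul_ncard_le_ncard_sep_of_fiberwise {α β R : Type*} [Semiring R] [PartialOrder R]
    [IsOrderedRing R] {s : Set α} (hs : s.Finite) (f : α → β) (p : α → Prop) (c : R)
    (h : ∀ y, c * {x ∈ s | f x = y}.ncard ≤ {x ∈ s | f x = y ∧ p x}.ncard) :
    c * s.ncard ≤ {x ∈ s | p x}.ncard := by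
  classical
  obtain ⟨s, rfl⟩ := hs.exists_finset_coe
  have hcoe (q : α → Prop) [DecidablePred q] :
      {x ∈ (s : Set α) | q x}.ncard = (s.filter q).card := by
    rw [← Set.ncard_coe_finset, Finset.coe_filter]; rfl
  simp only [hcoe, Set.ncard_coe_finset] at h ⊢
  rw [Finset.card_eq_sum_card_image f s, Finset.card_eq_sum_card_fiberwise (t := s.image f)
    fun x hx => Finset.mem_image_of_mem f (Finset.mem_filter.1 hx).1]
  push_cast
  rw [Finset.mul_sum]
  refine Finset.sum_le_sum fun y _ => (h y).trans_eq ?_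
  simp only [Finset.filter_filter, and_comm]

theorem Set.mul_ncard_le_ncard_sep_of_forall_fiber {α β R : Type*} [Semiring R]
    [PartialOrder R] [IsOrderedRing R] {s : Set (α × β)} (hs : s.Finite) (p : α × β → Prop)
    (c : R) (h : ∀ a, c * {b | (a, b) ∈ s}.ncard ≤ {b | (a, b) ∈ s ∧ p (a, b)}.ncard) :
    c * s.ncard ≤ {x ∈ s | p x}.ncard := by
  refine Set.mul_ncard_le_ncard_sep_of_fiberwise hs Prod.fst p c fun a => ?_
  have hfib : {x ∈ s | x.1 = a} = Prod.mk a '' {b | (a, b) ∈ s} := by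
    ext ⟨a', b⟩; constructor
    · rintro ⟨hx, rfl⟩; exact ⟨b, hx, rfl⟩
    · rintro ⟨b, hb, ⟨⟩⟩; exact ⟨hb, rfl⟩
  have hfibp : {x ∈ s | x.1 = a ∧ p x} = Prod.mk a '' {b | (a, b) ∈ s ∧ p (a, b)} := by
    ext ⟨a', b⟩; constructor
    · rintro ⟨hx, rfl, hp⟩; exact ⟨b, ⟨hx, hp⟩, rfl⟩
    · rintro ⟨b, hb, ⟨⟩⟩; exact ⟨hb.1, rfl, hb.2⟩
  rw [hfib, hfibp, Set.ncard_image_of_injective _ (Prod.mk_right_injective a),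
    Set.ncard_image_of_injective _ (Prod.mk_right_injective a)]
  exact h a

section Lines

variable {k V : Type*} [DivisionRing k] [AddCommGroup V] [Module k V]

theorem Submodule.eq_of_finrank_eq_one_of_mem {L M : Submodule k V} (hL : finrank k L = 1)
    (hM : finrank k M = 1) {w : V} (hw : w ≠ 0) (hwL : w ∈ L) (hwM : w ∈ M) : L = M :=
  (eq_span_singleton_of_mem_of_finrank_eq_one hL hwL hw).trans
    (eq_span_singleton_of_mem_of_finrank_eq_one hM hwM hw).symm

theorem Submodule.eq_of_sub_mem_of_sub_mem {L M : Submodule k V} (hL : finrank k L = 1)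
    (hM : finrank k M = 1) (hLM : L ≠ M) {a b x y : V} (hxa : x - a ∈ L) (hya : y - a ∈ L)
    (hxb : x - b ∈ M) (hyb : y - b ∈ M) : x = y := by
  by_contra hxy
  refine hLM (eq_of_finrank_eq_one_of_mem hL hM (sub_ne_zero.2 hxy) ?_ ?_)
  · simpa using L.sub_mem hxa hya
  · simpa using M.sub_mem hxb hyb

variable (k) in
def genericLines {ι : Type*} (v : ι → V) : Set (Submodule k V) :=
  {K | finrank k K = 1 ∧ ∀ i j, i ≠ j → v i - v j ∉ K}

theorem ncard_setOf_finrank_eq_one_le_ncard_genericLines_add [Finite (Submodule k V)] {r : ℕ}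
    {v : Fin r → V} (hv : Function.Injective v) :
    {K : Submodule k V | finrank k K = 1}.ncard ≤ (genericLines k v).ncard + (r * r - r) := by
  classical
  let D : Finset (Submodule k V) :=
    Finset.univ.offDiag.image fun p : Fin r × Fin r => k ∙ (v p.1 - v p.2)
  have hsub : {K : Submodule k V | finrank k K = 1} ⊆ genericLines k v ∪ ↑D := by
    intro K (hK : finrank k K = 1)
    by_cases hgen : K ∈ genericLines k v
    · exact Or.inl hgen
    obtain ⟨i, j, hij, hmem⟩ : ∃ i j, i ≠ j ∧ v i - v j ∈ K := by
      simpa [genericLines, hK] using hgen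
    refine Or.inr (Finset.mem_image.2 ⟨(i, j), by simpa using hij, ?_⟩)
    exact (eq_span_singleton_of_mem_of_finrank_eq_one hK hmem (sub_ne_zero.2 (hv.ne hij))).symm
  calc _ ≤ (genericLines k v ∪ ↑D).ncard := Set.ncard_le_ncard hsub
    _ ≤ (genericLines k v).ncard + D.card := by
      rw [← Set.ncard_coe_finset D]; exact Set.ncard_union_le _ _
    _ ≤ _ := by
      gcongr
      exact Finset.card_image_le.trans (by simp [Finset.offDiag_card])

end Lines

theorem ncard_setOf_finrank_eq_one_prod {k : Type*} [Field k] [Finite k] :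
    {K : Submodule k (k × k) | finrank k K = 1}.ncard = Nat.card k + 1 := by
  rw [← Nat.card_coe_set_eq, ← Projectivization.card_of_finrank_two k (k × k) (by simp)]
  exact Nat.card_congr (Projectivization.equivSubmodule k (k × k)).symm

theorem Nat.cast_descFactorial_three {R : Type*} [CommRing R] (a : ℕ) :
    (a.descFactorial 3 : R) = a * (a - 1) * (a - 2) := by
  rw [Nat.descFactorial_succ, Nat.cast_mul, Nat.cast_descFactorial_two]
  rcases Nat.lt_or_ge a 2 with ha | ha
  · interval_cases a <;> simp
  · push_cast [Nat.cast_sub ha]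
    ring

theorem cast_le_div_mul_of_le_descFactorial_three {N r s b : ℕ} (hN : 0 < N) (hbs : b ≤ s)
    (hb : b ≤ r.descFactorial 3) (hs : N + 1 ≤ s + 2 + (r * r - r)) :
    (b : ℚ) ≤ r * ((r : ℚ) ^ 2 - r) / N * s := by
  have hNq : (0 : ℚ) < N := by exact_mod_cast hN
  have hbq : (b : ℚ) ≤ r * (r - 1) * (r - 2) := by
    rw [← Nat.cast_descFactorial_three]; exact_mod_cast hb
  have hsq : (N : ℚ) + 1 ≤ s + 2 + ((r : ℚ) ^ 2 - r) := by
    have := (Nat.cast_le (α := ℚ)).2 hs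
    push_cast [Nat.cast_sub (Nat.le_mul_self r)] at this
    linarith
  rcases Nat.lt_or_ge r 3 with hr | hr
  · have hb0 : b = 0 := by
      have : r.descFactorial 3 = 0 := Nat.descFactorial_eq_zero_iff_lt.2 hr
      omega
    rw [hb0, Nat.cast_zero]
    have : (0 : ℚ) ≤ (r : ℚ) ^ 2 - r := by
      rcases r with _ | r
      · simp
      · push_cast; nlinarith
    positivity
  have hrq : (3 : ℚ) ≤ r := by exact_mod_cast hr
  by_cases hc : (N : ℚ) ≤ r * ((r : ℚ) ^ 2 - r)
  · calc (b : ℚ) ≤ s := by exact_mod_cast hbs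
      _ ≤ _ := le_mul_of_one_le_left (by positivity) ((one_le_div hNq).2 hc)
  replace hc := not_le.1 hc
  rw [div_mul_eq_mul_div, le_div_iff₀ hNq]
  have hrs : ((r : ℚ) - 2) * N ≤ r * s := by nlinarith
  calc (b : ℚ) * N ≤ r * (r - 1) * (r - 2) * N := mul_le_mul_of_nonneg_right hbq hNq.le
    _ = r * (r - 1) * ((r - 2) * N) := by ring
    _ ≤ r * (r - 1) * (r * s) := mul_le_mul_of_nonneg_left hrs (by nlinarith)
    _ = r * ((r : ℚ) ^ 2 - r) * s := by ring

section Incidence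

variable {N r : ℕ} (v : Fin r → ZMod N × ZMod N)

theorem shiftedLine_eq_of_sub_mem {K : Submodule (ZMod N) (ZMod N × ZMod N)}
    {u x : ZMod N × ZMod N} (h : x - u ∈ K) : shiftedLine N K u = shiftedLine N K x := by
  ext y
  simp only [shiftedLine, Set.mem_ofPred_eq]
  constructor
  · intro hy; simpa using K.sub_mem hy h
  · intro hy; simpa using K.add_mem hy h

theorem incNum_le_ncard {Ls : Set (Submodule (ZMod N) (ZMod N × ZMod N))} (hLs : Ls.Finite)
    (x : ZMod N × ZMod N) : incNum N v Ls x ≤ {K ∈ Ls | ∃ i, x - v i ∈ K}.ncard := by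
  have hsub : {C ∈ lineFamily N v Ls | x ∈ C} ⊆
      (fun K => shiftedLine N K x) '' {K ∈ Ls | ∃ i, x - v i ∈ K} := by
    rintro C ⟨⟨i, K, hK, rfl⟩, hxC⟩
    exact ⟨K, ⟨hK, i, hxC⟩, (shiftedLine_eq_of_sub_mem hxC).symm⟩
  have hfin : {K ∈ Ls | ∃ i, x - v i ∈ K}.Finite := hLs.subset fun _ hK => hK.1
  exact (Set.ncard_le_ncard hsub (hfin.image _)).trans (Set.ncard_image_le hfin)

theorem exists_sub_mem_of_incNum_eq_three {L M M' : Submodule (ZMod N) (ZMod N × ZMod N)}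
    {x : ZMod N × ZMod N} (h : incNum N v {L, M, M'} x = 3) :
    ∀ K ∈ ({L, M, M'} : Set _), ∃ i, x - v i ∈ K := by
  have hfin : ({L, M, M'} : Set (Submodule (ZMod N) (ZMod N × ZMod N))).Finite := by simp
  have hcard : ({L, M, M'} : Set (Submodule (ZMod N) (ZMod N × ZMod N))).ncard ≤ 3 := by
    refine (Set.ncard_insert_le _ _).trans ?_
    rw [Nat.add_le_add_iff_right]
    exact (Set.ncard_insert_le _ _).trans (by rw [Set.ncard_singleton])
  have heq : {K ∈ ({L, M, M'} : Set _) | ∃ i, x - v i ∈ K} = {L, M, M'} :=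
    Set.eq_of_subset_of_ncard_le (fun _ hK => hK.1)
      (hcard.trans (h ▸ incNum_le_ncard v hfin x)) hfin
  intro K hK
  rw [← heq] at hK
  exact hK.2

theorem exists_incidence_of_not_perfect [Fact N.Prime]
    {L M M' : Submodule (ZMod N) (ZMod N × ZMod N)} (hL : finrank (ZMod N) L = 1)
    (hM : finrank (ZMod N) M = 1) (hM' : finrank (ZMod N) M' = 1)
    (hLM : L ≠ M) (hLM' : L ≠ M') (hMM' : M ≠ M') (h : ¬ Perfect' N v {L, M, M'} 3) :
    ∃ x, x ∉ Set.range v ∧ ∃ e : Fin 3 ↪ Fin r,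
      x - v (e 0) ∈ L ∧ x - v (e 1) ∈ M ∧ x - v (e 2) ∈ M' := by
  simp only [Perfect', not_forall, exists_prop] at h
  obtain ⟨x, hinc, hx⟩ := h
  have hxv : ∀ i, x - v i ≠ 0 := fun i h0 => hx ⟨i, sub_eq_zero.1 h0⟩
  have hmem := exists_sub_mem_of_incNum_eq_three v hinc
  obtain ⟨i, hi⟩ := hmem L (by simp)
  obtain ⟨j, hj⟩ := hmem M (by simp)
  obtain ⟨k, hk⟩ := hmem M' (by simp)
  have hij : i ≠ j := by rintro rfl; exact hLM (eq_of_finrank_eq_one_of_mem hL hM (hxv i) hi hj)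
  have hik : i ≠ k := by rintro rfl; exact hLM' (eq_of_finrank_eq_one_of_mem hL hM' (hxv i) hi hk)
  have hjk : j ≠ k := by rintro rfl; exact hMM' (eq_of_finrank_eq_one_of_mem hM hM' (hxv j) hj hk)
  refine ⟨x, fun ⟨l, hl⟩ => hx ⟨l, hl.symm⟩, ⟨![i, j, k], ?_⟩, hi, hj, hk⟩
  simp [Function.Injective, Fin.forall_fin_succ, hij, hik, hjk, hij.symm, hik.symm, hjk.symm]

theorem ncard_not_perfect_le [Fact N.Prime] (L M : Submodule (ZMod N) (ZMod N × ZMod N)) :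
    {A | (L, M, A) ∈ genericTriples N v ∧ ¬ Perfect' N v {L, M, A} 3}.ncard
      ≤ r.descFactorial 3 := by
  set S := {A | (L, M, A) ∈ genericTriples N v ∧ ¬ Perfect' N v {L, M, A} 3}
  have key : ∀ A : S, ∃ x, x ∉ Set.range v ∧ ∃ e : Fin 3 ↪ Fin r,
      x - v (e 0) ∈ L ∧ x - v (e 1) ∈ M ∧ x - v (e 2) ∈ A.1 := by
    rintro ⟨A, ⟨⟨h1, h2, h3⟩, ⟨d1, d2, d3⟩, -⟩, hbad⟩
    exact exists_incidence_of_not_perfect v h1 h2 h3 d1 d2 d3 hbad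
  choose x hx e he using key
  have hinj : Function.Injective e := by
    intro A B hAB
    obtain ⟨⟨hL, hM, hA⟩, ⟨hLM, -, -⟩, -⟩ := A.2.1
    obtain ⟨⟨-, -, hB⟩, -, -⟩ := B.2.1
    obtain ⟨h0, h1, h2⟩ := he A
    obtain ⟨h0', h1', h2'⟩ := he B
    rw [← hAB] at h0' h1' h2'
    rw [eq_of_sub_mem_of_sub_mem hL hM hLM h0' h0 h1' h1] at h2'
    exact Subtype.ext (eq_of_finrank_eq_one_of_mem hA hB
      (sub_ne_zero.2 fun h => hx A ⟨_, h.symm⟩) h2 h2')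
  calc S.ncard = Nat.card S := (Nat.card_coe_set_eq S).symm
    _ ≤ Nat.card (Fin 3 ↪ Fin r) := Nat.card_le_card_of_injective e hinj
    _ = r.descFactorial 3 := by simp [Nat.card_eq_fintype_card, Fintype.card_embedding_eq]

theorem ncard_genericLines_le_ncard_add_two [Fact N.Prime]
    {L M : Submodule (ZMod N) (ZMod N × ZMod N)}
    (hne : {A | (L, M, A) ∈ genericTriples N v}.Nonempty) :
    (genericLines (ZMod N) v).ncard ≤ {A | (L, M, A) ∈ genericTriples N v}.ncard + 2 := by
  obtain ⟨_, ⟨hL, hM, -⟩, ⟨hLM, -, -⟩, hgen⟩ := hne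
  have hsub : genericLines (ZMod N) v \ {L, M} ⊆ {A | (L, M, A) ∈ genericTriples N v} := by
    rintro A ⟨⟨hA, hAgen⟩, hALM⟩
    simp only [Set.mem_insert_iff, Set.mem_singleton_iff, not_or] at hALM
    exact ⟨⟨hL, hM, hA⟩, ⟨hLM, Ne.symm hALM.1, Ne.symm hALM.2⟩,
      fun i j hij => ⟨(hgen i j hij).1, (hgen i j hij).2.1, hAgen i j hij⟩⟩
  calc (genericLines (ZMod N) v).ncard
      ≤ (genericLines (ZMod N) v \ {L, M}).ncard + ({L, M} : Set _).ncard :=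
        Set.ncard_le_ncard_sdiff_add_ncard _ _
    _ ≤ _ := add_le_add (Set.ncard_le_ncard hsub)
        ((Set.ncard_insert_le _ _).trans (by rw [Set.ncard_singleton]))

end Incidence

theorem one_sub_mul_ncard_le_ncard_perfect {N r : ℕ} (hN : N.Prime)
    {v : Fin r → ZMod N × ZMod N} (hv : Function.Injective v)
    (L M : Submodule (ZMod N) (ZMod N × ZMod N)) :
    (1 - r * ((r : ℚ) ^ 2 - r) / N) * {A | (L, M, A) ∈ genericTriples N v}.ncard ≤
      {A | (L, M, A) ∈ genericTriples N v ∧ Perfect' N v {L, M, A} 3}.ncard := by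
  have := Fact.mk hN
  have hsplit : {A | (L, M, A) ∈ genericTriples N v ∧ Perfect' N v {L, M, A} 3}.ncard +
      {A | (L, M, A) ∈ genericTriples N v ∧ ¬ Perfect' N v {L, M, A} 3}.ncard =
      {A | (L, M, A) ∈ genericTriples N v}.ncard :=
    Set.ncard_inter_add_ncard_sdiff_eq_ncard _ {A | Perfect' N v {L, M, A} 3}
  rcases {A | (L, M, A) ∈ genericTriples N v}.eq_empty_or_nonempty with hS | hS
  · simp [hS]
  have hlines : N + 1 ≤ {A | (L, M, A) ∈ genericTriples N v}.ncard + 2 + (r * r - r) := by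
    have := ncard_setOf_finrank_eq_one_prod (k := ZMod N)
    have := ncard_setOf_finrank_eq_one_le_ncard_genericLines_add (k := ZMod N) hv
    have := ncard_genericLines_le_ncard_add_two v hS
    rw [Nat.card_zmod] at *
    omega
  have hbad := cast_le_div_mul_of_le_descFactorial_three hN.pos (hsplit ▸ Nat.le_add_left _ _)
    (ncard_not_perfect_le v L M) hlines
  have hsplitq := congrArg (Nat.cast : ℕ → ℚ) hsplit
  push_cast at hsplitq
  linarith

theorem perfectness_probability_general (N r : ℕ) (hN : N.Prime)
    (v : Fin r → ZMod N × ZMod N) (hv : Function.Injective v) :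
    (1 - (r * ((r : ℚ) ^ 2 - r)) / N) * (Set.ncard (genericTriples N v) : ℚ)
      ≤ (Set.ncard {t ∈ genericTriples N v |
          Perfect' N v ({t.1, t.2.1, t.2.2} : Set _) 3} : ℚ) := by
  have := Fact.mk hN
  refine Set.mul_ncard_le_ncard_sep_of_forall_fiber (Set.toFinite _) _ _ fun L => ?_
  refine Set.mul_ncard_le_ncard_sep_of_forall_fiber (Set.toFinite _) _ _ fun M => ?_
  exact one_sub_mul_ncard_le_ncard_perfect hN hv L M

theorem perfectness_probability (N r : ℕ) (hN : N.Prime) (hodd : Odd N)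
    (v : Fin r → ZMod N × ZMod N) (hv : Function.Injective v) :
    (1 - (r * ((r : ℚ) ^ 2 - r)) / N) * (Set.ncard (genericTriples N v) : ℚ)
      ≤ (Set.ncard {t ∈ genericTriples N v |
          Perfect' N v ({t.1, t.2.1, t.2.2} : Set _) 3} : ℚ) :=
  perfectness_probability_general N r hN v hv
end
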